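/- Let p be an odd prime and x₁, x₂, x₃ ∈ F_p satisfy x₁ = x₂ and x₃ ≠ x₁. Then K₁(x₁,x₂,x₃) = p^{-3} ∑_{y₁,y₂,y₃} e_p(x₁y₁² − x₂y₂² − x₃y₃² + (x₃+x₂−x₁)(y₂+y₃−y₁)² + (x₂−x₁)(y₁−y₃)) satisfies |K₁(x₁,x₂,x₃)| ≤ p^{-1}. -/

import Mathlib

open Finset Complex

/-- `e_p(x) = exp(-2πi x / p)` via the canonical lift `x.val`. -/
noncomputable def ep (p : ℕ) (x : ZMod p) : ℂ :=
  Complex.exp (-2 * Real.pi * Complex.I * (x.val : ℂ) / p)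

/-- Normalized quadratic Gauss sum kernel `K(a,b) = (1/p) ∑_y e_p(a y² + b y)`. -/
noncomputable def Kker (p : ℕ) [NeZero p] (a b : ZMod p) : ℂ :=
  (p : ℂ)⁻¹ * ∑ y : ZMod p, ep p (a * y ^ 2 + b * y)

/-- The kernel `K₁(x₁,x₂,x₃) = p^{-3} ∑_{y₁,y₂,y₃} e_p(R₁)`. -/
noncomputable def K1 (p : ℕ) [NeZero p] (x₁ x₂ x₃ : ZMod p) : ℂ :=
  ((p : ℂ) ^ 3)⁻¹ * ∑ y₁ : ZMod p, ∑ y₂ : ZMod p, ∑ y₃ : ZMod p,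
    ep p (x₁ * y₁ ^ 2 - x₂ * y₂ ^ 2 - x₃ * y₃ ^ 2 +
      (x₃ + x₂ - x₁) * (y₂ + y₃ - y₁) ^ 2 + (x₂ - x₁) * (y₁ - y₃))

/-!
Substituting `y₂ = y₁ + t`, the phase of `K₁(a, a, b)` becomes
`(b - a) t² - 2 a t y₁ + 2 b t y₃`, which is affine in `(y₁, y₃)`. For `t ≠ 0` one of the
coefficients `2 a t`, `2 b t` is nonzero because `a ≠ b` and `p` is odd, so the sum over
`(y₁, y₃)` vanishes; only `t = 0` survives, contributing `p²`. Hence `K₁(a, a, b) = 1 / p`.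
-/

section
variable {p : ℕ} [NeZero p]

lemma ep_eq_stdAddChar_neg (x : ZMod p) : ep p x = ZMod.stdAddChar (-x) := by
  have hx : -x = ((-(x.val : ℤ) : ℤ) : ZMod p) := by push_cast [ZMod.natCast_zmod_val]; rfl
  rw [hx, ZMod.stdAddChar_coe, ep]
  push_cast
  ring_nf

lemma ep_add (x y : ZMod p) : ep p (x + y) = ep p x * ep p y := by
  simp only [ep_eq_stdAddChar_neg, neg_add, AddChar.map_add_eq_mul]

lemma ep_zero : ep p 0 = 1 := by
  rw [ep_eq_stdAddChar_neg, neg_zero, AddChar.map_zero_eq_one]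

lemma sum_ep_mul (c : ZMod p) : ∑ y, ep p (c * y) = if c = 0 then (p : ℂ) else 0 := by
  simp only [ep_eq_stdAddChar_neg, neg_mul_eq_mul_neg, mul_comm c,
    AddChar.sum_mulShift _ (ZMod.isPrimitive_stdAddChar p), neg_eq_zero, ZMod.card,
    Nat.cast_ite, Nat.cast_zero]

lemma sum_sum_ep_affine_eq_zero (d : ZMod p) {c₁ c₂ : ZMod p} (hc : c₁ ≠ 0 ∨ c₂ ≠ 0) :
    ∑ y₁, ∑ y₂, ep p (d + c₁ * y₁ + c₂ * y₂) = 0 := by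
  simp only [ep_add, ← Finset.mul_sum, ← Finset.sum_mul, sum_ep_mul]
  rcases hc with hc | hc <;> simp [hc]

end

section
variable {p : ℕ} [Fact p.Prime]

lemma two_ne_zero_of_odd (hodd : Odd p) : (2 : ZMod p) ≠ 0 := by
  refine Ring.two_ne_zero ?_
  rw [ZMod.ringChar_zmod_n]
  rintro rfl
  exact absurd hodd (by decide)

lemma sum_phase_K1_of_eq (h2 : (2 : ZMod p) ≠ 0) {a b : ZMod p} (hab : b ≠ a) :
    ∑ y₁ : ZMod p, ∑ y₂ : ZMod p, ∑ y₃ : ZMod p,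
      ep p (a * y₁ ^ 2 - a * y₂ ^ 2 - b * y₃ ^ 2 +
        (b + a - a) * (y₂ + y₃ - y₁) ^ 2 + (a - a) * (y₁ - y₃)) = (p : ℂ) ^ 2 := by
  have phase : ∀ y₁ t y₃ : ZMod p,
      a * y₁ ^ 2 - a * (y₁ + t) ^ 2 - b * y₃ ^ 2 + (b + a - a) * (y₁ + t + y₃ - y₁) ^ 2
        + (a - a) * (y₁ - y₃) = (b - a) * t ^ 2 + (-2 * a * t) * y₁ + (2 * b * t) * y₃ := by
    intros; ring
  conv_lhs => enter [2, y₁]; rw [← Equiv.sum_comp (Equiv.addLeft y₁)]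
  simp_rw [Equiv.coe_addLeft, phase]
  rw [Finset.sum_comm, Finset.sum_eq_single (0 : ZMod p)]
  · simp [ep_zero, ZMod.card, sq]
  · intro t _ ht
    refine sum_sum_ep_affine_eq_zero _ ?_
    by_cases ha : a = 0
    · exact Or.inr (mul_ne_zero (mul_ne_zero h2 (ha ▸ hab)) ht)
    · exact Or.inl (mul_ne_zero (mul_ne_zero (neg_ne_zero.mpr h2) ha) ht)
  · simp

lemma K1_eq_inv_of_eq (h2 : (2 : ZMod p) ≠ 0) {a b : ZMod p} (hab : b ≠ a) :
    K1 p a a b = (p : ℂ)⁻¹ := by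
  have hp : (p : ℂ) ≠ 0 := Nat.cast_ne_zero.mpr (NeZero.ne p)
  rw [K1, sum_phase_K1_of_eq h2 hab]
  field_simp

end

theorem K1_bound_of_eq (p : ℕ) [Fact p.Prime] (hodd : Odd p)
    (x₁ x₂ x₃ : ZMod p) (h : x₁ = x₂) (hne : x₃ ≠ x₁) :
    ‖K1 p x₁ x₂ x₃‖ ≤ (p : ℝ)⁻¹ := by
  subst h
  rw [K1_eq_inv_of_eq (two_ne_zero_of_odd hodd) hne, norm_inv, Complex.norm_natCast]
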